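/- For all n ≥ 1 and distinct pegs i, j ∈ {1,2,3} with intermediate peg k = 6 − i − j, the optimal total cost satisfies C_1^{i,j} = min(w_{ij}, w_{ik} + w_{kj}), and for all n ≥ 2, C_n^{i,j} = min(C_{n−1}^{i,k} + C_{n−1}^{k,j} + w_{ij}, 2·C_{n−1}^{i,j} + C_{n−1}^{j,i} + w_{ik} + w_{kj}). -/
import Mathlib


/-- Pegs are natural numbers; the valid pegs are 1, 2, 3. -/
abbrev Peg := ℕ

/-- A peg is valid if it is one of 1, 2, 3. -/
def validPeg (p : Peg) : Prop := p = 1 ∨ p = 2 ∨ p = 3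

/-- A configuration of `n` discs assigns to each disc (indexed by size,
smaller index = smaller disc) the peg it lies on. -/
abbrev Conf (n : ℕ) := Fin n → Peg

/-- `LegalMove c c' i j` : the configuration `c'` results from `c` by a single
legal move of the topmost (smallest) disc of peg `i` onto a different peg `j`,
where every disc currently on peg `j` is larger. -/
def LegalMove {n : ℕ} (c c' : Conf n) (i j : Peg) : Prop :=
  validPeg i ∧ validPeg j ∧ i ≠ j ∧
  ∃ d : Fin n, c d = i ∧ (∀ d', c d' = i → d ≤ d') ∧ (∀ d', c d' = j → d < d') ∧
    c' d = j ∧ (∀ d', d' ≠ d → c' d' = c d')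

/-- `Solves c ms c'` : the list of moves `ms` (each move recorded as the ordered
pair (source peg, destination peg)) legally transforms configuration `c` into `c'`. -/
inductive Solves {n : ℕ} : Conf n → List (Peg × Peg) → Conf n → Prop
  | nil (c : Conf n) : Solves c [] c
  | cons {c c' c'' : Conf n} {ms : List (Peg × Peg)} {i j : Peg} :
      LegalMove c c' i j → Solves c' ms c'' → Solves c ((i, j) :: ms) c''

/-- A solution from peg `i` to peg `j` with `n` discs: a list of legal moves
transforming the configuration with all discs on peg `i` into the configuration
with all discs on peg `j`. -/
def IsSolution (n : ℕ) (i j : Peg) (ms : List (Peg × Peg)) : Prop :=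
  Solves (fun _ : Fin n => i) ms (fun _ : Fin n => j)

/-- Total cost of a sequence of moves with respect to the weight function `w`. -/
noncomputable def cost (w : Peg → Peg → ℝ) (ms : List (Peg × Peg)) : ℝ :=
  (ms.map fun m => w m.1 m.2).sum

/-- `C w n i j` : the optimal (minimum) total cost over all solutions
from peg `i` to peg `j` with `n` discs. -/
noncomputable def C (w : Peg → Peg → ℝ) (n : ℕ) (i j : Peg) : ℝ :=
  sInf {x : ℝ | ∃ ms : List (Peg × Peg), IsSolution n i j ms ∧ cost w ms = x}


/-! ### Auxiliary development -/

/-- The third peg. -/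
def oth (a b : Peg) : Peg := 6 - a - b

lemma oth_spec {a b : Peg} (ha : validPeg a) (hb : validPeg b) (hab : a ≠ b) :
    validPeg (oth a b) ∧ oth a b ≠ a ∧ oth a b ≠ b := by
  rcases ha with rfl|rfl|rfl <;> rcases hb with rfl|rfl|rfl <;> simp [oth, validPeg] at hab ⊢

lemma third_eq {p a b : Peg} (hp : validPeg p) (ha : validPeg a) (hb : validPeg b)
    (hab : a ≠ b) (hpa : p ≠ a) (hpb : p ≠ b) : p = oth a b := by
  rcases hp with rfl|rfl|rfl <;> rcases ha with rfl|rfl|rfl <;> rcases hb with rfl|rfl|rfl <;>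
    simp [oth] at hab hpa hpb ⊢

lemma cost_nil (w : Peg → Peg → ℝ) : cost w [] = 0 := by simp [cost]

lemma cost_cons (w : Peg → Peg → ℝ) (a b : Peg) (ms : List (Peg × Peg)) :
    cost w ((a, b) :: ms) = w a b + cost w ms := by simp [cost]

lemma cost_append (w : Peg → Peg → ℝ) (ms ms' : List (Peg × Peg)) :
    cost w (ms ++ ms') = cost w ms + cost w ms' := by simp [cost]

lemma cost_nonneg {w : Peg → Peg → ℝ} (hw : ∀ i j, 0 ≤ w i j) (ms : List (Peg × Peg)) :
    0 ≤ cost w ms := by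
  apply List.sum_nonneg
  intro x hx
  obtain ⟨m, -, rfl⟩ := List.mem_map.mp hx
  exact hw _ _

/-- The set of solution costs. -/
def costSet (w : Peg → Peg → ℝ) (n : ℕ) (i j : Peg) : Set ℝ :=
  {x : ℝ | ∃ ms : List (Peg × Peg), IsSolution n i j ms ∧ cost w ms = x}

lemma C_eq_sInf (w : Peg → Peg → ℝ) (n : ℕ) (i j : Peg) : C w n i j = sInf (costSet w n i j) := rfl

lemma costSet_bddBelow {w : Peg → Peg → ℝ} (hw : ∀ i j, 0 ≤ w i j) (n : ℕ) (i j : Peg) :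
    BddBelow (costSet w n i j) := by
  refine ⟨0, ?_⟩
  rintro x ⟨ms, -, rfl⟩
  exact cost_nonneg hw ms

lemma C_le_cost {w : Peg → Peg → ℝ} (hw : ∀ i j, 0 ≤ w i j) {n : ℕ} {i j : Peg}
    {ms : List (Peg × Peg)} (h : IsSolution n i j ms) : C w n i j ≤ cost w ms :=
  csInf_le (costSet_bddBelow hw n i j) ⟨ms, h, rfl⟩

lemma C_nonneg {w : Peg → Peg → ℝ} (hw : ∀ i j, 0 ≤ w i j) (n : ℕ) (i j : Peg) :
    0 ≤ C w n i j := by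
  apply Real.sInf_nonneg
  rintro x ⟨ms, -, rfl⟩
  exact cost_nonneg hw ms

lemma C_self {w : Peg → Peg → ℝ} (hw : ∀ i j, 0 ≤ w i j) (n : ℕ) (a : Peg) :
    C w n a a = 0 := by
  refine le_antisymm ?_ (C_nonneg hw n a a)
  have : IsSolution n a a [] := Solves.nil _
  simpa [cost_nil] using C_le_cost hw this

lemma C_zero {w : Peg → Peg → ℝ} (hw : ∀ i j, 0 ≤ w i j) (a b : Peg) :
    C w 0 a b = 0 := by
  refine le_antisymm ?_ (C_nonneg hw 0 a b)
  have : IsSolution 0 a b [] := by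
    unfold IsSolution
    have : (fun _ : Fin 0 => a) = (fun _ : Fin 0 => b) := funext fun x => x.elim0
    rw [this]; exact Solves.nil _
  simpa [cost_nil] using C_le_cost hw this

/-! ### Lifting and restricting moves -/

/-- Configuration with the largest disc on `q` and all `m` smaller discs on `p`. -/
def bigAt (m : ℕ) (q p : Peg) : Conf (m + 1) := Fin.snoc (fun _ => p) q

lemma legal_snoc {m : ℕ} {c c' : Conf m} {a b : Peg} (r : Peg) (h : LegalMove c c' a b) :
    LegalMove (Fin.snoc c r) (Fin.snoc c' r) a b := by
  obtain ⟨va, vb, hab, d, hda, hmin, htgt, hdb, hoth⟩ := h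
  refine ⟨va, vb, hab, d.castSucc, by simpa using hda, ?_, ?_, by simpa using hdb, ?_⟩
  · intro d'
    induction d' using Fin.lastCases with
    | last => intro _; exact Fin.le_last _
    | cast e =>
        rw [Fin.snoc_castSucc]
        intro he
        exact Fin.castSucc_le_castSucc_iff.mpr (hmin e he)
  · intro d'
    induction d' using Fin.lastCases with
    | last => intro _; exact Fin.castSucc_lt_last _
    | cast e =>
        rw [Fin.snoc_castSucc]
        intro he
        exact Fin.castSucc_lt_castSucc_iff.mpr (htgt e he)
  · intro d' hd'
    induction d' using Fin.lastCases with
    | last => simp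
    | cast e =>
        have : e ≠ d := by
          intro h; exact hd' (by rw [h])
        rw [Fin.snoc_castSucc, Fin.snoc_castSucc]
        exact hoth e this

lemma solves_snoc {m : ℕ} {c c' : Conf m} {ms : List (Peg × Peg)} (r : Peg)
    (h : Solves c ms c') : Solves (Fin.snoc c r) ms (Fin.snoc c' r) := by
  induction h with
  | nil => exact Solves.nil _
  | cons hm _ ih => exact Solves.cons (legal_snoc r hm) ih

lemma solves_append {m : ℕ} {c c' c'' : Conf m} {ms ms' : List (Peg × Peg)}
    (h : Solves c ms c') (h' : Solves c' ms' c'') : Solves c (ms ++ ms') c'' := by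
  induction h with
  | nil => exact h'
  | cons hm _ ih => exact Solves.cons hm (ih h')

lemma snoc_const (m : ℕ) (a : Peg) :
    Fin.snoc (fun _ : Fin m => a) a = (fun _ : Fin (m+1) => a) := by
  funext d
  induction d using Fin.lastCases with
  | last => simp
  | cast e => simp

lemma big_move_legal (m : ℕ) {a b : Peg} (p : Peg) (va : validPeg a) (vb : validPeg b)
    (hab : a ≠ b) (hpa : p ≠ a) (hpb : p ≠ b) :
    LegalMove (bigAt m a p) (bigAt m b p) a b := by
  refine ⟨va, vb, hab, Fin.last m, by simp [bigAt], ?_, ?_, by simp [bigAt], ?_⟩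
  · intro d'
    induction d' using Fin.lastCases with
    | last => intro _; exact le_refl _
    | cast e => simp [bigAt]; intro h; exact absurd h hpa
  · intro d'
    induction d' using Fin.lastCases with
    | last => simp [bigAt]; intro h; exact absurd h hab
    | cast e => simp [bigAt]; intro h; exact absurd h hpb
  · intro d' hd'
    induction d' using Fin.lastCases with
    | last => exact absurd rfl hd'
    | cast e => simp [bigAt]

lemma sol_nonempty : ∀ (n : ℕ) {a b : Peg}, validPeg a → validPeg b →
    ∃ ms, IsSolution n a b ms := by
  intro n
  induction n with
  | zero =>
      intro a b _ _
      refine ⟨[], ?_⟩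
      unfold IsSolution
      have : (fun _ : Fin 0 => a) = (fun _ : Fin 0 => b) := funext fun x => x.elim0
      rw [this]; exact Solves.nil _
  | succ m ih =>
      intro a b ha hb
      by_cases hab : a = b
      · subst hab; exact ⟨[], Solves.nil _⟩
      · obtain ⟨hvt, hta, htb⟩ := oth_spec ha hb hab
        set t := oth a b with ht
        obtain ⟨s₁, hs₁⟩ := ih ha hvt
        obtain ⟨s₂, hs₂⟩ := ih hvt hb
        refine ⟨s₁ ++ (a, b) :: s₂, ?_⟩
        unfold IsSolution
        rw [← snoc_const m a]
        have l₁ : Solves (Fin.snoc (fun _ : Fin m => a) a) s₁ (Fin.snoc (fun _ : Fin m => t) a) :=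
          solves_snoc a hs₁
        have mv : LegalMove (Fin.snoc (fun _ : Fin m => t) a) (Fin.snoc (fun _ : Fin m => t) b) a b :=
          big_move_legal m t ha hb hab hta htb
        have l₂ : Solves (Fin.snoc (fun _ : Fin m => t) b) s₂ (fun _ : Fin (m+1) => b) := by
          rw [← snoc_const m b]; exact solves_snoc b hs₂
        exact solves_append l₁ (Solves.cons mv l₂)

lemma C_tri {w : Peg → Peg → ℝ} (hw : ∀ i j, 0 ≤ w i j) (n : ℕ) {a b c : Peg}
    (ha : validPeg a) (hb : validPeg b) (hc : validPeg c) :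
    C w n a c ≤ C w n a b + C w n b c := by
  obtain ⟨s₁, hs₁⟩ := sol_nonempty n ha hb
  have hne : (costSet w n a b).Nonempty := ⟨cost w s₁, s₁, hs₁, rfl⟩
  obtain ⟨s₂, hs₂⟩ := sol_nonempty n hb hc
  have hne' : (costSet w n b c).Nonempty := ⟨cost w s₂, s₂, hs₂, rfl⟩
  rw [C_eq_sInf w n a b, C_eq_sInf w n b c]
  have key : ∀ x ∈ costSet w n a b, ∀ y ∈ costSet w n b c, C w n a c ≤ x + y := by
    rintro x ⟨u, hu, rfl⟩ y ⟨v, hv, rfl⟩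
    have : IsSolution n a c (u ++ v) := solves_append hu hv
    calc C w n a c ≤ cost w (u ++ v) := C_le_cost hw this
    _ = cost w u + cost w v := cost_append w u v
  have h1 : ∀ x ∈ costSet w n a b, C w n a c - sInf (costSet w n b c) ≤ x := by
    intro x hx
    have : C w n a c - x ≤ sInf (costSet w n b c) :=
      le_csInf hne' fun y hy => by linarith [key x hx y hy]
    linarith
  have := le_csInf hne h1
  linarith
lemma legal_init {m : ℕ} {c c' : Conf (m+1)} {a b : Peg} (h : LegalMove c c' a b)
    (hl : c' (Fin.last m) = c (Fin.last m)) : LegalMove (Fin.init c) (Fin.init c') a b := by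
  obtain ⟨va, vb, hab, d, hda, hmin, htgt, hdb, hoth⟩ := h
  have hdl : d ≠ Fin.last m := by
    rintro rfl
    rw [hdb, hda] at hl
    exact hab hl.symm
  have hdm : (d : ℕ) < m := by
    have := d.isLt
    rcases Nat.lt_or_ge (d : ℕ) m with h | h
    · exact h
    · exfalso; apply hdl; apply Fin.ext; simp only [Fin.val_last]; omega
  have hcs : Fin.castSucc (⟨(d : ℕ), hdm⟩ : Fin m) = d := by
    apply Fin.ext; simp
  refine ⟨va, vb, hab, ⟨(d : ℕ), hdm⟩, ?_, ?_, ?_, ?_, ?_⟩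
  · show c (Fin.castSucc _) = a
    rw [hcs]; exact hda
  · intro d' hd'
    have := hmin (Fin.castSucc d') hd'
    rw [← hcs] at this
    exact Fin.castSucc_le_castSucc_iff.mp this
  · intro d' hd'
    have := htgt (Fin.castSucc d') hd'
    rw [← hcs] at this
    exact Fin.castSucc_lt_castSucc_iff.mp this
  · show c' (Fin.castSucc _) = b
    rw [hcs]; exact hdb
  · intro d' hd'
    show c' (Fin.castSucc d') = c (Fin.castSucc d')
    apply hoth
    rw [← hcs]
    exact fun h => hd' (Fin.castSucc_injective m h)

lemma legal_valid {n : ℕ} {c c' : Conf n} {a b : Peg} (h : LegalMove c c' a b)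
    (hv : ∀ d, validPeg (c d)) : ∀ d, validPeg (c' d) := by
  obtain ⟨va, vb, hab, d, hda, hmin, htgt, hdb, hoth⟩ := h
  intro d'
  by_cases hd : d' = d
  · rw [hd, hdb]; exact vb
  · rw [hoth d' hd]; exact hv d'

lemma split_big {m : ℕ} {c c'' : Conf (m+1)} {ms : List (Peg × Peg)}
    (h : Solves c ms c'') (hv : ∀ d, validPeg (c d)) :
    (Solves (Fin.init c) ms (Fin.init c'') ∧ c'' (Fin.last m) = c (Fin.last m)) ∨
    (∃ ms₁ q' ms₂, ms = ms₁ ++ (c (Fin.last m), q') :: ms₂ ∧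
      validPeg q' ∧ c (Fin.last m) ≠ q' ∧
      Solves (Fin.init c) ms₁ (fun _ : Fin m => oth (c (Fin.last m)) q') ∧
      Solves (bigAt m q' (oth (c (Fin.last m)) q')) ms₂ c'') := by
  induction h with
  | nil => exact Or.inl ⟨Solves.nil _, rfl⟩
  | @cons c c' c'' ms a b hm hs ih =>
    have hv' : ∀ d, validPeg (c' d) := legal_valid hm hv
    obtain ⟨va, vb, hab, d, hda, hmin, htgt, hdb, hoth⟩ := hm
    by_cases hd : d = Fin.last m
    · -- the first move moves the big disc
      subst hd
      have hca : c (Fin.last m) = a := hda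
      have hsmall : ∀ e : Fin m, c (Fin.castSucc e) = oth a b := by
        intro e
        have hne : Fin.castSucc e ≠ Fin.last m := (Fin.castSucc_lt_last e).ne
        refine third_eq (hv _) va vb hab ?_ ?_
        · intro hcontra
          exact absurd (hmin _ hcontra) (not_le.mpr (Fin.castSucc_lt_last e))
        · intro hcontra
          exact absurd (htgt _ hcontra) (not_lt.mpr (Fin.le_last _))
      have hinit : Fin.init c = fun _ : Fin m => oth a b := by
        funext e; exact hsmall e
      have hc' : c' = bigAt m b (oth a b) := by
        funext e
        induction e using Fin.lastCases with
        | last => rw [hdb]; simp [bigAt]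
        | cast e =>
            have hne : Fin.castSucc e ≠ Fin.last m := (Fin.castSucc_lt_last e).ne
            rw [hoth _ hne, hsmall e]; simp [bigAt]
      refine Or.inr ⟨[], b, ms, by rw [hca]; rfl, vb, by rw [hca]; exact hab, ?_, ?_⟩
      · rw [hca, hinit]; exact Solves.nil _
      · rw [hca, ← hc']; exact hs
    · -- the first move moves a small disc
      have hlast : c' (Fin.last m) = c (Fin.last m) := hoth _ (Ne.symm hd)
      have hlm : LegalMove c c' a b := ⟨va, vb, hab, d, hda, hmin, htgt, hdb, hoth⟩
      rcases ih hv' with ⟨hsol, hl⟩ | ⟨ms₁, q', ms₂, heq, vq', hne, h₁, h₂⟩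
      · exact Or.inl ⟨Solves.cons (legal_init hlm hlast) hsol, by rw [hl, hlast]⟩
      · refine Or.inr ⟨(a, b) :: ms₁, q', ms₂, ?_, vq', ?_, ?_, ?_⟩
        · rw [heq, hlast, List.cons_append]
        · rw [← hlast]; exact hne
        · rw [← hlast]; exact Solves.cons (legal_init hlm hlast) h₁
        · rw [← hlast]; exact h₂
/-- Lower-bound potential: big disc at `q`, small discs all at `p`, target `j`. -/
noncomputable def U (w : Peg → Peg → ℝ) (m : ℕ) (j q p : Peg) : ℝ :=
  if q = j then C w m p j
  else min (C w m p (oth q j) + w q j + C w m (oth q j) j)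
           (C w m p j + C w m j q + C w m q j + w q (oth q j) + w (oth q j) j)

lemma U_step {w : Peg → Peg → ℝ} (hw : ∀ i j, 0 ≤ w i j) (m : ℕ) {j q q' p : Peg}
    (hj : validPeg j) (hq : validPeg q) (hq' : validPeg q') (hp : validPeg p)
    (hqq' : q ≠ q') :
    U w m j q p ≤ C w m p (oth q q') + w q q' + U w m j q' (oth q q') := by
  have v1 : validPeg 1 := Or.inl rfl
  have v2 : validPeg 2 := Or.inr (Or.inl rfl)
  have v3 : validPeg 3 := Or.inr (Or.inr rfl)
  rcases hj with rfl|rfl|rfl <;> rcases hq with rfl|rfl|rfl <;> rcases hq' with rfl|rfl|rfl <;>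
    first
    | exact absurd rfl hqq'
    | (norm_num [U, oth]
       try simp only [min_def]
       try split_ifs
       all_goals first
       | linarith [C_tri hw m hp v1 v1, C_tri hw m hp v1 v2, C_tri hw m hp v1 v3,
         C_tri hw m hp v2 v1, C_tri hw m hp v2 v2, C_tri hw m hp v2 v3,
         C_tri hw m hp v3 v1, C_tri hw m hp v3 v2, C_tri hw m hp v3 v3,
         C_self hw m 1, C_self hw m 2, C_self hw m 3,
         C_nonneg hw m p 1, C_nonneg hw m p 2, C_nonneg hw m p 3,
         C_nonneg hw m 1 2, C_nonneg hw m 2 1, C_nonneg hw m 1 3,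
         C_nonneg hw m 3 1, C_nonneg hw m 2 3, C_nonneg hw m 3 2,
         hw 1 2, hw 2 1, hw 1 3, hw 3 1, hw 2 3, hw 3 2, hw 1 1, hw 2 2, hw 3 3]
       | (left; linarith [C_tri hw m hp v1 v1, C_tri hw m hp v1 v2, C_tri hw m hp v1 v3,
         C_tri hw m hp v2 v1, C_tri hw m hp v2 v2, C_tri hw m hp v2 v3,
         C_tri hw m hp v3 v1, C_tri hw m hp v3 v2, C_tri hw m hp v3 v3,
         C_self hw m 1, C_self hw m 2, C_self hw m 3,
         C_nonneg hw m p 1, C_nonneg hw m p 2, C_nonneg hw m p 3,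
         C_nonneg hw m 1 2, C_nonneg hw m 2 1, C_nonneg hw m 1 3,
         C_nonneg hw m 3 1, C_nonneg hw m 2 3, C_nonneg hw m 3 2,
         hw 1 2, hw 2 1, hw 1 3, hw 3 1, hw 2 3, hw 3 2, hw 1 1, hw 2 2, hw 3 3])
       | (right; linarith [C_tri hw m hp v1 v1, C_tri hw m hp v1 v2, C_tri hw m hp v1 v3,
         C_tri hw m hp v2 v1, C_tri hw m hp v2 v2, C_tri hw m hp v2 v3,
         C_tri hw m hp v3 v1, C_tri hw m hp v3 v2, C_tri hw m hp v3 v3,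
         C_self hw m 1, C_self hw m 2, C_self hw m 3,
         C_nonneg hw m p 1, C_nonneg hw m p 2, C_nonneg hw m p 3,
         C_nonneg hw m 1 2, C_nonneg hw m 2 1, C_nonneg hw m 1 3,
         C_nonneg hw m 3 1, C_nonneg hw m 2 3, C_nonneg hw m 3 2,
         hw 1 2, hw 2 1, hw 1 3, hw 3 1, hw 2 3, hw 3 2, hw 1 1, hw 2 2, hw 3 3]))
lemma bigAt_last (m : ℕ) (q p : Peg) : bigAt m q p (Fin.last m) = q := by simp [bigAt]

lemma bigAt_init (m : ℕ) (q p : Peg) : Fin.init (bigAt m q p) = fun _ : Fin m => p := by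
  simp [bigAt]

lemma bigAt_valid {m : ℕ} {q p : Peg} (hq : validPeg q) (hp : validPeg p) :
    ∀ d, validPeg (bigAt m q p d) := by
  intro d
  induction d using Fin.lastCases with
  | last => simpa [bigAt] using hq
  | cast e => simpa [bigAt] using hp

lemma LB {w : Peg → Peg → ℝ} (hw : ∀ i j, 0 ≤ w i j) (m : ℕ) {j : Peg} (hj : validPeg j) :
    ∀ (N : ℕ) (ms : List (Peg × Peg)) (q p : Peg), ms.length ≤ N →
      validPeg q → validPeg p → Solves (bigAt m q p) ms (fun _ : Fin (m+1) => j) →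
      U w m j q p ≤ cost w ms := by
  intro N
  induction N with
  | zero =>
      intro ms q p hlen hq hp hs
      rcases split_big hs (bigAt_valid hq hp) with ⟨hsol, hl⟩ | ⟨ms₁, q', ms₂, heq, -, -, -, -⟩
      · have hqj : q = j := by
          rw [bigAt_last] at hl; exact hl.symm
        rw [bigAt_init] at hsol
        have : IsSolution m p j ms := hsol
        have := C_le_cost hw this
        simpa [U, hqj] using this
      · exfalso
        have := congrArg List.length heq
        simp [List.length_append] at this
        omega
  | succ N ih =>
      intro ms q p hlen hq hp hs
      rcases split_big hs (bigAt_valid hq hp) with ⟨hsol, hl⟩ | ⟨ms₁, q', ms₂, heq, vq', hne, h₁, h₂⟩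
      · have hqj : q = j := by
          rw [bigAt_last] at hl; exact hl.symm
        rw [bigAt_init] at hsol
        have : IsSolution m p j ms := hsol
        have := C_le_cost hw this
        simpa [U, hqj] using this
      · rw [bigAt_last] at heq hne h₁ h₂
        rw [bigAt_init] at h₁
        obtain ⟨vt, -, -⟩ := oth_spec hq vq' hne
        have hms₁ : IsSolution m p (oth q q') ms₁ := h₁
        have hc₁ : C w m p (oth q q') ≤ cost w ms₁ := C_le_cost hw hms₁
        have hlen₂ : ms₂.length ≤ N := by
          have := congrArg List.length heq
          simp [List.length_append] at this
          omega
        have hIH : U w m j q' (oth q q') ≤ cost w ms₂ := ih ms₂ q' (oth q q') hlen₂ vq' vt h₂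
        have hstep := U_step hw m hj hq vq' hp hne
        have hcost : cost w ms = cost w ms₁ + w q q' + cost w ms₂ := by
          rw [heq, cost_append, cost_cons]; ring
        rw [hcost]
        linarith
lemma costSet_nonempty {w : Peg → Peg → ℝ} {a b : Peg} (n : ℕ)
    (ha : validPeg a) (hb : validPeg b) : (costSet w n a b).Nonempty := by
  obtain ⟨ms, hms⟩ := sol_nonempty n ha hb
  exact ⟨cost w ms, ms, hms, rfl⟩

lemma csInfPairAux {S T : Set ℝ} (hS : S.Nonempty) (hT : T.Nonempty) {z r : ℝ}
    (h : ∀ x ∈ S, ∀ y ∈ T, z ≤ x + y + r) : z ≤ sInf S + sInf T + r := by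
  have h1 : ∀ x ∈ S, z - r - sInf T ≤ x := by
    intro x hx
    have : z - x - r ≤ sInf T := le_csInf hT fun y hy => by linarith [h x hx y hy]
    linarith
  have := le_csInf hS h1
  linarith

lemma csInfTwoOneAux {S T : Set ℝ} (hS : S.Nonempty) (hT : T.Nonempty) {z r : ℝ}
    (h : ∀ x ∈ S, ∀ y ∈ T, z ≤ 2*x + y + r) : z ≤ 2 * sInf S + sInf T + r := by
  have h1 : ∀ x ∈ S, (z - r - sInf T)/2 ≤ x := by
    intro x hx
    have : z - 2*x - r ≤ sInf T := le_csInf hT fun y hy => by linarith [h x hx y hy]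
    linarith
  have := le_csInf hS h1
  linarith

lemma eq_bigAt_one (q p : Peg) : (fun _ : Fin 1 => q) = bigAt 0 q p := by
  funext d
  have hd : d = Fin.last 0 := by
    apply Fin.ext; have := d.isLt; simp only [Fin.val_last]; omega
  rw [hd, bigAt_last]

lemma bigAt_zero_eq (q p p' : Peg) : bigAt 0 q p = bigAt 0 q p' :=
  (eq_bigAt_one q p).symm.trans (eq_bigAt_one q p')
/-- the optimal total cost satisfies the recursion of Theorem 1. -/
theorem stmt0 (w : Peg → Peg → ℝ) (hw : ∀ i j : Peg, 0 ≤ w i j)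
    (i j k : Peg) (hi : validPeg i) (hj : validPeg j) (hij : i ≠ j)
    (hk : k = 6 - i - j) :
    C w 1 i j = min (w i j) (w i k + w k j) ∧
    ∀ n : ℕ, 2 ≤ n →
      C w n i j = min (C w (n - 1) i k + C w (n - 1) k j + w i j)
        (2 * C w (n - 1) i j + C w (n - 1) j i + w i k + w k j) := by
  have hk' : k = oth i j := hk
  have hko := oth_spec hi hj hij
  rw [← hk'] at hko
  obtain ⟨vk, hki, hkj⟩ := hko
  constructor
  · -- one disc
    apply le_antisymm
    · apply le_min
      · -- direct move
        have hsol : IsSolution 1 i j [(i, j)] := by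
          unfold IsSolution
          rw [eq_bigAt_one i k, eq_bigAt_one j k]
          exact Solves.cons (big_move_legal 0 k hi hj hij hki hkj) (Solves.nil _)
        have := C_le_cost hw hsol
        simpa [cost_cons, cost_nil] using this
      · -- via k
        have hsol : IsSolution 1 i j [(i, k), (k, j)] := by
          unfold IsSolution
          rw [eq_bigAt_one i j, eq_bigAt_one j i]
          refine Solves.cons (big_move_legal 0 j hi vk (Ne.symm hki) hij.symm (Ne.symm hkj)) ?_
          rw [bigAt_zero_eq k j i]
          exact Solves.cons (big_move_legal 0 i vk hj hkj hki.symm hij) (Solves.nil _)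
        have := C_le_cost hw hsol
        simpa [cost_cons, cost_nil] using this
    · rw [C_eq_sInf]
      apply le_csInf (costSet_nonempty 1 hi hj)
      rintro x ⟨ms, hms, rfl⟩
      have hms' : Solves (bigAt 0 i i) ms (fun _ : Fin 1 => j) := by
        rw [← eq_bigAt_one i i]; exact hms
      have h := LB hw 0 hj ms.length ms i i le_rfl hi hi hms'
      simp only [U, if_neg hij, C_zero hw] at h
      rw [hk']
      have h2 : min (w i j) (w i (oth i j) + w (oth i j) j) ≤ cost w ms := by
        simpa using h
      exact h2
  · -- n ≥ 2
    intro n hn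
    obtain ⟨m, rfl⟩ : ∃ m, n = m + 1 := ⟨n - 1, by omega⟩
    simp only [Nat.add_sub_cancel]
    apply le_antisymm
    · apply le_min
      · -- strategy 1
        rw [C_eq_sInf w m i k, C_eq_sInf w m k j]
        apply csInfPairAux (costSet_nonempty m hi vk) (costSet_nonempty m vk hj)
        rintro x ⟨u, hu, rfl⟩ y ⟨v, hv, rfl⟩
        have hsol : IsSolution (m+1) i j (u ++ (i, j) :: v) := by
          unfold IsSolution
          rw [← snoc_const m i]
          refine solves_append (solves_snoc i hu) ?_
          refine Solves.cons (big_move_legal m k hi hj hij hki hkj) ?_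
          rw [← snoc_const m j]
          exact solves_snoc j hv
        have := C_le_cost hw hsol
        rw [cost_append, cost_cons] at this
        linarith
      · -- strategy 2
        have key := csInfTwoOneAux (costSet_nonempty (w := w) m hi hj) (costSet_nonempty (w := w) m hj hi)
          (z := C w (m+1) i j) (r := w i k + w k j) ?_
        · rw [C_eq_sInf w m i j, C_eq_sInf w m j i]
          linarith
        · rintro x ⟨u, hu, rfl⟩ y ⟨v, hv, rfl⟩
          have hsol : IsSolution (m+1) i j (u ++ (i, k) :: (v ++ (k, j) :: u)) := by
            unfold IsSolution
            rw [← snoc_const m i]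
            refine solves_append (solves_snoc i hu) ?_
            refine Solves.cons (big_move_legal m j hi vk (Ne.symm hki) hij.symm (Ne.symm hkj)) ?_
            refine solves_append (solves_snoc k hv) ?_
            refine Solves.cons (big_move_legal m i vk hj hkj hki.symm hij) ?_
            rw [← snoc_const m j]
            exact solves_snoc j hu
          have := C_le_cost hw hsol
          rw [cost_append, cost_cons, cost_append, cost_cons] at this
          linarith
    · rw [C_eq_sInf w (m+1) i j]
      apply le_csInf (costSet_nonempty (m+1) hi hj)
      rintro x ⟨ms, hms, rfl⟩
      have hms' : Solves (bigAt m i i) ms (fun _ : Fin (m+1) => j) := by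
        have : bigAt m i i = (fun _ : Fin (m+1) => i) := snoc_const m i
        rw [this]; exact hms
      have h := LB hw m hj ms.length ms i i le_rfl hi hi hms'
      simp only [U, if_neg hij] at h
      have e1 : C w m i k + C w m k j + w i j
          = C w m i (oth i j) + w i j + C w m (oth i j) j := by rw [← hk']; ring
      have e2 : 2 * C w m i j + C w m j i + w i k + w k j
          = C w m i j + C w m j i + C w m i j + w i (oth i j) + w (oth i j) j := by
        rw [← hk']; ring
      rw [e1, e2]
      exact h
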